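/- If |A| = 1, then the inequational theory of BCCS(A) modulo the weak impossible futures preorder has no finite basis: for every finite axiomatization E sound modulo ≲_WIF, the inequation a^m x ≼ a^m x + x is not derivable from E whenever m exceeds the weak depth of every term occurring in E, even though it is sound. -/
import Mathlib


/-- BCCS terms over concrete actions `A` (with `none` playing the role of the
hidden action τ) and variables `V`. -/
inductive Tm (A V : Type) : Type
  | nil : Tm A V
  | var : V → Tm A V
  | plus : Tm A V → Tm A V → Tm A V
  | pre : Option A → Tm A V → Tm A V

namespace Tm

variable {A V : Type}

/-- The operational semantics of BCCS. -/
inductive Step : Tm A V → Option A → Tm A V → Prop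
  | pre (α : Option A) (t : Tm A V) : Step (.pre α t) α t
  | plusL {t : Tm A V} {α : Option A} {t' : Tm A V} (u : Tm A V) :
      Step t α t' → Step (.plus t u) α t'
  | plusR (t : Tm A V) {u : Tm A V} {α : Option A} {u' : Tm A V} :
      Step u α u' → Step (.plus t u) α u'

/-- `⇒` : the reflexive-transitive closure of τ-steps. -/
def WTau : Tm A V → Tm A V → Prop := Relation.ReflTransGen (fun t u => Step t none u)

/-- Strong (concrete) traces leading to a state. -/
inductive TraceTo : Tm A V → List A → Tm A V → Prop
  | refl (t : Tm A V) : TraceTo t [] t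
  | act {t : Tm A V} {a : A} {t' : Tm A V} {w : List A} {u : Tm A V} :
      Step t (some a) t' → TraceTo t' w u → TraceTo t (a :: w) u

/-- Weak traces leading to a state (τ-steps are skipped). -/
inductive WTraceTo : Tm A V → List A → Tm A V → Prop
  | refl (t : Tm A V) : WTraceTo t [] t
  | tau {t t' : Tm A V} {w : List A} {u : Tm A V} :
      Step t none t' → WTraceTo t' w u → WTraceTo t w u
  | act {t : Tm A V} {a : A} {t' : Tm A V} {w : List A} {u : Tm A V} :
      Step t (some a) t' → WTraceTo t' w u → WTraceTo t (a :: w) u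

/-- The set of (strong) traces of a term. -/
def T (t : Tm A V) : Set (List A) := {w | ∃ t', TraceTo t w t'}

/-- The set of weak traces of a term. -/
def WT (t : Tm A V) : Set (List A) := {w | ∃ t', WTraceTo t w t'}

/-- `(w, B)` is an impossible future of `t`. -/
def ImpFut (t : Tm A V) (w : List A) (B : Set (List A)) : Prop :=
  ∃ t', TraceTo t w t' ∧ ∀ s ∈ T t', s ∉ B

/-- `(w, B)` is a weak impossible future of `t`. -/
def WImpFut (t : Tm A V) (w : List A) (B : Set (List A)) : Prop :=
  ∃ t', WTraceTo t w t' ∧ ∀ s ∈ WT t', s ∉ B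

/-- The (concrete) impossible futures preorder. -/
def IFle (p q : Tm A V) : Prop := ∀ w B, ImpFut p w B → ImpFut q w B

/-- (Concrete) impossible futures equivalence. -/
def IFeq (p q : Tm A V) : Prop := IFle p q ∧ IFle q p

/-- The weak impossible futures preorder. -/
def WIFle (p q : Tm A V) : Prop :=
  (∀ w B, WImpFut p w B → WImpFut q w B) ∧ (WT p = WT q) ∧
  ((∃ p', Step p none p') → ∃ q', Step q none q')

/-- Weak impossible futures equivalence. -/
def WIFeq (p q : Tm A V) : Prop := WIFle p q ∧ WIFle q p

/-- The variables occurring in a term. -/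
def vars : Tm A V → Set V
  | nil => ∅
  | var x => {x}
  | plus t u => vars t ∪ vars u
  | pre _ t => vars t

/-- A term is closed if it contains no variables. -/
def Closed (t : Tm A V) : Prop := vars t = ∅

/-- Substitution. -/
def subst (σ : V → Tm A V) : Tm A V → Tm A V
  | nil => nil
  | var x => σ x
  | plus t u => plus (subst σ t) (subst σ u)
  | pre α t => pre α (subst σ t)

/-- A closed substitution. -/
def ClosedSub (σ : V → Tm A V) : Prop := ∀ x, Closed (σ x)

/-- A BCCSP term: one containing no occurrence of the τ prefix. -/
def NoTau : Tm A V → Prop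
  | nil => True
  | var _ => True
  | plus t u => NoTau t ∧ NoTau u
  | pre none _ => False
  | pre (some _) t => NoTau t

/-- The variables occurring initially (outside all prefixes). -/
def initVars : Tm A V → Set V
  | nil => ∅
  | var x => {x}
  | plus t u => initVars t ∪ initVars u
  | pre _ _ => ∅

/-- The variables having a non-initial occurrence (under some prefix). -/
def deepVars : Tm A V → Set V
  | nil => ∅
  | var _ => ∅
  | plus t u => deepVars t ∪ deepVars u
  | pre _ t => vars t

/-- A term is safe if no variable occurs both initially and non-initially. -/
def Safe (t : Tm A V) : Prop := initVars t ∩ deepVars t = ∅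

/-- `init-τ` : rename all initial prefixes into τ. -/
def initTau : Tm A V → Tm A V
  | nil => nil
  | var x => var x
  | plus t u => plus (initTau t) (initTau u)
  | pre _ t => pre none t

/-- The weak depth of a term (τ-prefixes are not counted). -/
def wdepth : Tm A V → ℕ
  | nil => 0
  | var _ => 0
  | plus t u => max (wdepth t) (wdepth u)
  | pre none t => wdepth t
  | pre (some _) t => wdepth t + 1

/-- `n`-fold prefixing with the action `a`. -/
def npre (a : A) : ℕ → Tm A V → Tm A V
  | 0, t => t
  | n + 1, t => pre (some a) (npre a n t)

/-- Finite sums of terms. -/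
def listSum : List (Tm A V) → Tm A V
  | [] => nil
  | t :: l => plus t (listSum l)

/-- Weak traces ending in a variable: `(w, x) ∈ WTV t` iff `t` can weakly perform
`w` and reach a term in which `x` occurs initially. -/
def WTV (t : Tm A V) : Set (List A × V) :=
  {wx | ∃ t', WTraceTo t wx.1 t' ∧ wx.2 ∈ initVars t'}

/-- The axioms A1-4 + WIF1 + WIF2 (as schemas, i.e. closed under instantiation). -/
inductive AX : Tm A V → Tm A V → Prop
  | A1 (t u : Tm A V) : AX (.plus t u) (.plus u t)
  | A2 (t u v : Tm A V) : AX (.plus (.plus t u) v) (.plus t (.plus u v))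
  | A3 (t : Tm A V) : AX (.plus t t) t
  | A4 (t : Tm A V) : AX (.plus t .nil) t
  | WIF1 (α : Option A) (t u : Tm A V) :
      AX (.pre α (.plus (.pre none t) (.pre none u))) (.plus (.pre α t) (.pre α u))
  | WIF2 (t u : Tm A V) :
      AX (.plus (.pre none t) u) (.plus (.pre none t) (.pre none (.plus t u)))

/-- Equational derivability from an axiomatization `E`. -/
inductive Deriv (E : Tm A V → Tm A V → Prop) : Tm A V → Tm A V → Prop
  | ax {t u : Tm A V} : E t u → Deriv E t u
  | inst {t u : Tm A V} (σ : V → Tm A V) : E t u → Deriv E (subst σ t) (subst σ u)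
  | refl (t : Tm A V) : Deriv E t t
  | symm {t u : Tm A V} : Deriv E t u → Deriv E u t
  | trans {t u v : Tm A V} : Deriv E t u → Deriv E u v → Deriv E t v
  | pre (α : Option A) {t u : Tm A V} : Deriv E t u → Deriv E (.pre α t) (.pre α u)
  | plus {t u t' u' : Tm A V} :
      Deriv E t t' → Deriv E u u' → Deriv E (.plus t u) (.plus t' u')

/-- Inequational derivability from an axiomatization `E` (no symmetry). -/
inductive IDeriv (E : Tm A V → Tm A V → Prop) : Tm A V → Tm A V → Prop
  | ax {t u : Tm A V} : E t u → IDeriv E t u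
  | inst {t u : Tm A V} (σ : V → Tm A V) : E t u → IDeriv E (subst σ t) (subst σ u)
  | refl (t : Tm A V) : IDeriv E t t
  | trans {t u v : Tm A V} : IDeriv E t u → IDeriv E u v → IDeriv E t v
  | pre (α : Option A) {t u : Tm A V} : IDeriv E t u → IDeriv E (.pre α t) (.pre α u)
  | plus {t u t' u' : Tm A V} :
      IDeriv E t t' → IDeriv E u u' → IDeriv E (.plus t u) (.plus t' u')

end Tm

namespace Tm

variable {A V : Type}

/-! ### Basic substitution lemmas -/

theorem subst_comp (ρ σ : V → Tm A V) (t : Tm A V) :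
    subst ρ (subst σ t) = subst (fun z => subst ρ (σ z)) t := by
  induction t with
  | nil => rfl
  | var y => rfl
  | plus t u iht ihu => simp [subst, iht, ihu]
  | pre α t iht => simp [subst, iht]

theorem subst_var (t : Tm A V) : subst Tm.var t = t := by
  induction t with
  | nil => rfl
  | var y => rfl
  | plus t u iht ihu => simp [subst, iht, ihu]
  | pre α t iht => simp [subst, iht]

theorem closed_subst {ρ : V → Tm A V} (hρ : ClosedSub ρ) (t : Tm A V) :
    Closed (subst ρ t) := by
  induction t with
  | nil => simp [Closed, subst, vars]
  | var y => exact hρ y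
  | plus t u iht ihu =>
      simp only [Closed, subst, vars] at *; rw [iht, ihu]; simp
  | pre α t iht => exact iht

theorem closedSub_comp {ρ σ : V → Tm A V} (hρ : ClosedSub ρ) :
    ClosedSub (fun z => subst ρ (σ z)) := fun z => closed_subst hρ (σ z)

/-! ### Step lemmas -/

theorem step_subst {σ : V → Tm A V} {t : Tm A V} {α : Option A} {t' : Tm A V}
    (h : Step t α t') : Step (subst σ t) α (subst σ t') := by
  induction h with
  | pre α t => exact Step.pre α (subst σ t)
  | plusL u _ ih => exact Step.plusL _ ih
  | plusR t _ ih => exact Step.plusR _ ih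

theorem step_initVars {σ : V → Tm A V} {c : Tm A V} {y : V} {α : Option A} {s : Tm A V}
    (hy : y ∈ initVars c) (h : Step (σ y) α s) : Step (subst σ c) α s := by
  induction c with
  | nil => simp [initVars] at hy
  | var z => simp [initVars] at hy; subst hy; exact h
  | plus t u iht ihu =>
      rcases hy with hy | hy
      · exact Step.plusL _ (iht hy)
      · exact Step.plusR _ (ihu hy)
  | pre α' t iht => simp [initVars] at hy

theorem step_subst_inv {σ : V → Tm A V} {t : Tm A V} {α : Option A} {s : Tm A V}
    (h : Step (subst σ t) α s) :
    (∃ t', Step t α t' ∧ s = subst σ t') ∨ ∃ y ∈ initVars t, Step (σ y) α s := by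
  induction t with
  | nil => cases h
  | var z => exact Or.inr ⟨z, by simp [initVars], h⟩
  | plus t u iht ihu =>
      cases h with
      | plusL _ h =>
          rcases iht h with ⟨t', ht, rfl⟩ | ⟨y, hy, hs⟩
          · exact Or.inl ⟨t', Step.plusL _ ht, rfl⟩
          · exact Or.inr ⟨y, Or.inl hy, hs⟩
      | plusR _ h =>
          rcases ihu h with ⟨t', ht, rfl⟩ | ⟨y, hy, hs⟩
          · exact Or.inl ⟨t', Step.plusR _ ht, rfl⟩
          · exact Or.inr ⟨y, Or.inr hy, hs⟩
  | pre α' t iht =>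
      cases h with
      | pre => exact Or.inl ⟨t, Step.pre _ t, rfl⟩

theorem step_wdepth {t : Tm A V} {α : Option A} {t' : Tm A V} (h : Step t α t') :
    (α = none → wdepth t' ≤ wdepth t) ∧ (∀ b, α = some b → wdepth t' + 1 ≤ wdepth t) := by
  induction h with
  | pre α t =>
      cases α with
      | none => simp [wdepth]
      | some b => simp [wdepth]
  | plusL u _ ih =>
      refine ⟨fun h => ?_, fun b h => ?_⟩
      · exact le_trans (ih.1 h) (le_max_left _ _)
      · exact le_trans (ih.2 b h) (le_max_left _ _)
  | plusR t _ ih =>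
      refine ⟨fun h => ?_, fun b h => ?_⟩
      · exact le_trans (ih.1 h) (le_max_right _ _)
      · exact le_trans (ih.2 b h) (le_max_right _ _)

end Tm
namespace Tm

variable {A V : Type}

theorem wtrace_append {t : Tm A V} {w1 : List A} {t' : Tm A V} {w2 : List A} {u : Tm A V}
    (h1 : WTraceTo t w1 t') (h2 : WTraceTo t' w2 u) : WTraceTo t (w1 ++ w2) u := by
  induction h1 with
  | refl t => exact h2
  | tau hs _ ih => exact WTraceTo.tau hs (ih h2)
  | act hs _ ih => exact WTraceTo.act hs (ih h2)

theorem wtrace_subst {σ : V → Tm A V} {t : Tm A V} {w : List A} {t' : Tm A V}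
    (h : WTraceTo t w t') : WTraceTo (subst σ t) w (subst σ t') := by
  induction h with
  | refl t => exact WTraceTo.refl _
  | tau hs _ ih => exact WTraceTo.tau (step_subst hs) ih
  | act hs _ ih => exact WTraceTo.act (step_subst hs) ih

theorem wtrace_initVars {σ : V → Tm A V} {c : Tm A V} {y : V} {w : List A} {s : Tm A V}
    (hy : y ∈ initVars c) (h : WTraceTo (σ y) w s) :
    (w = [] ∧ s = σ y) ∨ WTraceTo (subst σ c) w s := by
  cases h with
  | refl => exact Or.inl ⟨rfl, rfl⟩
  | tau hs h => exact Or.inr (WTraceTo.tau (step_initVars hy hs) h)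
  | act hs h => exact Or.inr (WTraceTo.act (step_initVars hy hs) h)

theorem wtrace_len {t : Tm A V} {w : List A} {u : Tm A V} (h : WTraceTo t w u) :
    w.length ≤ wdepth t := by
  induction h with
  | refl t => simp
  | tau hs _ ih => exact le_trans ih ((step_wdepth hs).1 rfl)
  | act hs _ ih =>
      simp only [List.length_cons]
      exact le_trans (Nat.add_le_add_right ih 1) ((step_wdepth hs).2 _ rfl)

theorem wtrace_plusL {t : Tm A V} {w : List A} {u : Tm A V} (h : WTraceTo t w u)
    (t'' : Tm A V) : WTraceTo (plus t t'') w u ∨ (w = [] ∧ u = t) := by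
  cases h with
  | refl => exact Or.inr ⟨rfl, rfl⟩
  | tau hs h => exact Or.inl (WTraceTo.tau (Step.plusL _ hs) h)
  | act hs h => exact Or.inl (WTraceTo.act (Step.plusL _ hs) h)

theorem wtrace_plusR {t : Tm A V} {w : List A} {u : Tm A V} (h : WTraceTo t w u)
    (t'' : Tm A V) : WTraceTo (plus t'' t) w u ∨ (w = [] ∧ u = t) := by
  cases h with
  | refl => exact Or.inr ⟨rfl, rfl⟩
  | tau hs h => exact Or.inl (WTraceTo.tau (Step.plusR _ hs) h)
  | act hs h => exact Or.inl (WTraceTo.act (Step.plusR _ hs) h)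

theorem wtrace_nil {w : List A} {u : Tm A V} (h : WTraceTo (nil : Tm A V) w u) :
    w = [] ∧ u = nil := by
  cases h with
  | refl => exact ⟨rfl, rfl⟩
  | tau hs _ => cases hs
  | act hs _ => cases hs

/-- Decomposition of weak traces of a substitution instance. -/
theorem wtrace_decomp {σ : V → Tm A V} {t : Tm A V} {w : List A} {u : Tm A V}
    (h : WTraceTo (subst σ t) w u) :
    (∃ t', WTraceTo t w t' ∧ u = subst σ t') ∨
      (∃ w1 w2 t' y, w = w1 ++ w2 ∧ WTraceTo t w1 t' ∧ y ∈ initVars t' ∧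
        WTraceTo (σ y) w2 u) := by
  generalize hq : subst σ t = q at h
  induction h generalizing t with
  | refl q => exact Or.inl ⟨t, WTraceTo.refl t, hq.symm⟩
  | @tau q s w u hs h ih =>
      subst hq
      rcases step_subst_inv hs with ⟨t₀, ht₀, rfl⟩ | ⟨y, hy, hys⟩
      · rcases ih rfl with ⟨t', htr, rfl⟩ | ⟨w1, w2, t', y, rfl, h1, h2, h3⟩
        · exact Or.inl ⟨t', WTraceTo.tau ht₀ htr, rfl⟩
        · exact Or.inr ⟨w1, w2, t', y, rfl, WTraceTo.tau ht₀ h1, h2, h3⟩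
      · exact Or.inr ⟨[], w, t, y, rfl, WTraceTo.refl t, hy, WTraceTo.tau hys h⟩
  | @act q b s w u hs h ih =>
      subst hq
      rcases step_subst_inv hs with ⟨t₀, ht₀, rfl⟩ | ⟨y, hy, hys⟩
      · rcases ih rfl with ⟨t', htr, rfl⟩ | ⟨w1, w2, t', y, rfl, h1, h2, h3⟩
        · exact Or.inl ⟨t', WTraceTo.act ht₀ htr, rfl⟩
        · exact Or.inr ⟨b :: w1, w2, t', y, rfl, WTraceTo.act ht₀ h1, h2, h3⟩
      · exact Or.inr ⟨[], b :: w, t, y, rfl, WTraceTo.refl t, hy, WTraceTo.act hys h⟩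

/-! ### npre lemmas -/

theorem wdepth_npre (a : A) (k : ℕ) (c : Tm A V) :
    wdepth (npre a k c) = k + wdepth c := by
  induction k with
  | zero => simp [npre]
  | succ n ih => simp [npre, wdepth, ih]; omega

theorem subst_npre (σ : V → Tm A V) (a : A) (k : ℕ) (c : Tm A V) :
    subst σ (npre a k c) = npre a k (subst σ c) := by
  induction k with
  | zero => rfl
  | succ n ih => simp [npre, subst, ih]

theorem closed_npre (a : A) (k : ℕ) : Closed (npre a k (nil : Tm A V)) := by
  induction k with
  | zero => simp [npre, Closed, vars]
  | succ n ih => simpa [npre, Closed, vars] using ih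

theorem wtrace_npre (a : A) (k : ℕ) :
    WTraceTo (npre a k (nil : Tm A V)) (List.replicate k a) nil := by
  induction k with
  | zero => exact WTraceTo.refl _
  | succ n ih => exact WTraceTo.act (Step.pre _ _) ih

theorem wtrace_npre_inv {a : A} {k : ℕ} {w : List A} {u : Tm A V}
    (h : WTraceTo (npre a k (nil : Tm A V)) w u) :
    u = npre a (k - w.length) nil ∧ w.length ≤ k := by
  induction k generalizing w u with
  | zero => rcases wtrace_nil h with ⟨rfl, rfl⟩; simp [npre]
  | succ n ih =>
      cases h with
      | refl => simp
      | tau hs _ => cases hs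
      | act hs h =>
          cases hs
          rcases ih h with ⟨rfl, hle⟩
          simp only [List.length_cons]
          constructor
          · congr 1; omega
          · omega

end Tm
namespace Tm

variable {A V : Type}

/-- The set of weak depths at which variable `x` occurs in `t`. -/
def Occ (x : V) : Tm A V → Set ℕ
  | nil => ∅
  | var y => {k | k = 0 ∧ y = x}
  | plus t u => Occ x t ∪ Occ x u
  | pre none t => Occ x t
  | pre (some _) t => (· + 1) '' Occ x t

theorem occ_le_wdepth {x : V} {t : Tm A V} {k : ℕ} (h : k ∈ Occ x t) :
    k ≤ wdepth t := by
  induction t generalizing k with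
  | nil => simp [Occ] at h
  | var y => rcases h with ⟨rfl, rfl⟩; simp [wdepth]
  | plus t u iht ihu =>
      rcases h with h | h
      · exact le_trans (iht h) (le_max_left _ _)
      · exact le_trans (ihu h) (le_max_right _ _)
  | pre α t iht =>
      cases α with
      | none => exact iht h
      | some b =>
          obtain ⟨k', hk', rfl⟩ := h
          have h2 := iht hk'
          simp only [wdepth]
          omega

theorem occ_subst {x : V} {σ : V → Tm A V} {t : Tm A V} {k : ℕ} :
    k ∈ Occ x (subst σ t) ↔ ∃ y d e, d ∈ Occ y t ∧ e ∈ Occ x (σ y) ∧ k = d + e := by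
  induction t generalizing k with
  | nil =>
      simp only [subst, Occ]
      constructor
      · intro h; exact absurd h (by simp)
      · rintro ⟨y, d, e, hd, -, -⟩; simp [Occ] at hd
  | var z =>
      simp only [subst]
      constructor
      · intro h; exact ⟨z, 0, k, by simp [Occ], h, by omega⟩
      · rintro ⟨y, d, e, ⟨rfl, rfl⟩, he, rfl⟩; simpa using he
  | plus t u iht ihu =>
      simp only [subst, Occ, Set.mem_union, iht, ihu]
      constructor
      · rintro (⟨y, d, e, hd, he, rfl⟩ | ⟨y, d, e, hd, he, rfl⟩)
        · exact ⟨y, d, e, Or.inl hd, he, rfl⟩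
        · exact ⟨y, d, e, Or.inr hd, he, rfl⟩
      · rintro ⟨y, d, e, hd | hd, he, rfl⟩
        · exact Or.inl ⟨y, d, e, hd, he, rfl⟩
        · exact Or.inr ⟨y, d, e, hd, he, rfl⟩
  | pre α t iht =>
      cases α with
      | none => simpa only [subst, Occ] using iht
      | some b =>
          simp only [subst, Occ, Set.mem_image]
          constructor
          · rintro ⟨k', hk', rfl⟩
            rcases iht.1 hk' with ⟨y, d, e, hd, he, rfl⟩
            exact ⟨y, d + 1, e, ⟨d, hd, rfl⟩, he, by omega⟩
          · rintro ⟨y, d, e, ⟨d', hd', rfl⟩, he, rfl⟩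
            exact ⟨d' + e, iht.2 ⟨y, d', e, hd', he, rfl⟩, by omega⟩

theorem init_occ {x : V} {t : Tm A V} (h : x ∈ initVars t) : 0 ∈ Occ x t := by
  induction t with
  | nil => simp [initVars] at h
  | var y => simp [initVars] at h; simp [Occ, h]
  | plus t u iht ihu =>
      rcases h with h | h
      · exact Or.inl (iht h)
      · exact Or.inr (ihu h)
  | pre α t iht => simp [initVars] at h

theorem step_occ {x : V} {t : Tm A V} {α : Option A} {t' : Tm A V} (h : Step t α t') :
    (α = none → Occ x t' ⊆ Occ x t) ∧
      (∀ b, α = some b → ∀ k ∈ Occ x t', k + 1 ∈ Occ x t) := by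
  induction h with
  | pre α t =>
      cases α with
      | none => exact ⟨fun _ => subset_rfl, by simp⟩
      | some b => exact ⟨by simp, fun b' _ k hk => ⟨k, hk, rfl⟩⟩
  | plusL u _ ih =>
      exact ⟨fun h => subset_trans (ih.1 h) Set.subset_union_left,
        fun b h k hk => Or.inl (ih.2 b h k hk)⟩
  | plusR t _ ih =>
      exact ⟨fun h => subset_trans (ih.1 h) Set.subset_union_right,
        fun b h k hk => Or.inr (ih.2 b h k hk)⟩

theorem wtv_occ {x : V} {t : Tm A V} {w : List A} {t' : Tm A V}
    (h : WTraceTo t w t') (hx : x ∈ initVars t') : w.length ∈ Occ x t := by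
  induction h with
  | refl t => exact init_occ hx
  | tau hs _ ih => exact (step_occ hs).1 rfl (ih hx)
  | act hs _ ih =>
      simpa using (step_occ hs).2 _ rfl _ (ih hx)

theorem occ_wtv {a : A} (hA : ∀ b : A, b = a) {x : V} {t : Tm A V} {k : ℕ}
    (h : k ∈ Occ x t) :
    ∃ t', WTraceTo t (List.replicate k a) t' ∧ x ∈ initVars t' := by
  induction t generalizing k with
  | nil => simp [Occ] at h
  | var y =>
      obtain ⟨rfl, hy⟩ := h
      refine ⟨var y, WTraceTo.refl _, ?_⟩
      simp [initVars, hy]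
  | plus t u iht ihu =>
      rcases h with h | h
      · rcases iht h with ⟨t', htr, hx⟩
        rcases wtrace_plusL htr u with h' | ⟨hw, heq⟩
        · exact ⟨t', h', hx⟩
        · exact ⟨plus t u, by rw [hw]; exact WTraceTo.refl _, Or.inl (heq ▸ hx)⟩
      · rcases ihu h with ⟨t', htr, hx⟩
        rcases wtrace_plusR htr t with h' | ⟨hw, heq⟩
        · exact ⟨t', h', hx⟩
        · exact ⟨plus t u, by rw [hw]; exact WTraceTo.refl _, Or.inr (heq ▸ hx)⟩
  | pre α t iht =>
      cases α with
      | none =>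
          rcases iht h with ⟨t', htr, hx⟩
          exact ⟨t', WTraceTo.tau (Step.pre none t) htr, hx⟩
      | some b =>
          rcases h with ⟨k', hk', rfl⟩
          rcases iht hk' with ⟨t', htr, hx⟩
          refine ⟨t', ?_, hx⟩
          rw [List.replicate_succ, hA b]
          exact WTraceTo.act (hA b ▸ Step.pre (some b) t) htr

/-! ### Characterization of weak traces when |A| = 1 -/

theorem wtrace_exists {a : A} (hA : ∀ b : A, b = a) (t : Tm A V) :
    ∀ k ≤ wdepth t, ∃ u, WTraceTo t (List.replicate k a) u := by
  induction t with
  | nil => intro k hk; simp [wdepth] at hk; exact ⟨nil, hk ▸ WTraceTo.refl _⟩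
  | var y => intro k hk; simp [wdepth] at hk; exact ⟨var y, hk ▸ WTraceTo.refl _⟩
  | plus t u iht ihu =>
      intro k hk
      simp only [wdepth, le_max_iff] at hk
      rcases hk with hk | hk
      · rcases iht k hk with ⟨u', htr⟩
        rcases wtrace_plusL htr u with h' | ⟨hw, -⟩
        · exact ⟨u', h'⟩
        · exact ⟨plus t u, by rw [hw]; exact WTraceTo.refl _⟩
      · rcases ihu k hk with ⟨u', htr⟩
        rcases wtrace_plusR htr t with h' | ⟨hw, -⟩
        · exact ⟨u', h'⟩
        · exact ⟨plus t u, by rw [hw]; exact WTraceTo.refl _⟩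
  | pre α t iht =>
      cases α with
      | none =>
          intro k hk
          rcases iht k hk with ⟨u', htr⟩
          exact ⟨u', WTraceTo.tau (Step.pre none t) htr⟩
      | some b =>
          intro k hk
          cases k with
          | zero => exact ⟨pre (some b) t, WTraceTo.refl _⟩
          | succ k' =>
              simp only [wdepth] at hk
              rcases iht k' (by omega) with ⟨u', htr⟩
              refine ⟨u', ?_⟩
              rw [List.replicate_succ, hA b]
              exact WTraceTo.act (hA b ▸ Step.pre (some b) t) htr

theorem wt_char {a : A} (hA : ∀ b : A, b = a) (t : Tm A V) :
    WT t = {w | w.length ≤ wdepth t} := by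
  ext w
  constructor
  · rintro ⟨t', htr⟩; exact wtrace_len htr
  · intro hw
    have hw' : w = List.replicate w.length a :=
      List.eq_replicate_length.2 fun b _ => hA b
    rcases wtrace_exists hA t w.length hw with ⟨u, htr⟩
    exact ⟨u, hw' ▸ htr⟩

theorem wdepth_eq_of_wt_eq {a : A} (hA : ∀ b : A, b = a) {t u : Tm A V}
    (h : WT t = WT u) : wdepth t = wdepth u := by
  rw [wt_char hA, wt_char hA] at h
  have h1 := Set.ext_iff.1 h (List.replicate (wdepth t) a)
  have h2 := Set.ext_iff.1 h (List.replicate (wdepth u) a)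
  simp only [Set.mem_setOf_eq, List.length_replicate] at h1 h2
  omega

theorem wt_eq_of_wdepth_eq {a : A} (hA : ∀ b : A, b = a) {t u : Tm A V}
    (h : wdepth t = wdepth u) : WT t = WT u := by
  rw [wt_char hA, wt_char hA, h]

end Tm
namespace Tm

variable {A V : Type}

theorem wifle_refl (p : Tm A V) : WIFle p p := ⟨fun _ _ h => h, rfl, id⟩

theorem wifle_trans {p q r : Tm A V} (h1 : WIFle p q) (h2 : WIFle q r) : WIFle p r :=
  ⟨fun w B h => h2.1 w B (h1.1 w B h), h1.2.1.trans h2.2.1, fun h => h2.2.2 (h1.2.2 h)⟩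

theorem wt_tau_sub {t t' : Tm A V} (h : Step t none t') : WT t' ⊆ WT t := by
  rintro w ⟨u, htr⟩
  exact ⟨u, WTraceTo.tau h htr⟩

theorem wifle_pre {a : A} (hA : ∀ b : A, b = a) (α : Option A) {p q : Tm A V}
    (h : WIFle p q) : WIFle (pre α p) (pre α q) := by
  have hd : wdepth p = wdepth q := wdepth_eq_of_wt_eq hA h.2.1
  have hdp : wdepth (pre α p) = wdepth (pre α q) := by
    cases α <;> simp [wdepth, hd]
  refine ⟨?_, wt_eq_of_wdepth_eq hA hdp, ?_⟩
  · rintro w B ⟨t', htr, hB⟩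
    cases htr with
    | refl =>
        exact ⟨pre α q, WTraceTo.refl _, by rw [← wt_eq_of_wdepth_eq hA hdp]; exact hB⟩
    | tau hs htr =>
        cases hs
        obtain ⟨u', hu, hBu⟩ := h.1 w B ⟨t', htr, hB⟩
        exact ⟨u', WTraceTo.tau (Step.pre none q) hu, hBu⟩
    | act hs htr =>
        cases hs
        obtain ⟨u', hu, hBu⟩ := h.1 _ B ⟨t', htr, hB⟩
        exact ⟨u', WTraceTo.act (Step.pre _ q) hu, hBu⟩
  · rintro ⟨p', hp'⟩
    cases hp'
    exact ⟨q, Step.pre none q⟩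

theorem wifle_plus {a : A} (hA : ∀ b : A, b = a) {p q p' q' : Tm A V}
    (h : WIFle p q) (h' : WIFle p' q') : WIFle (plus p p') (plus q q') := by
  have hd : wdepth p = wdepth q := wdepth_eq_of_wt_eq hA h.2.1
  have hd' : wdepth p' = wdepth q' := wdepth_eq_of_wt_eq hA h'.2.1
  have hdp : wdepth (plus p p') = wdepth (plus q q') := by simp [wdepth, hd, hd']
  refine ⟨?_, wt_eq_of_wdepth_eq hA hdp, ?_⟩
  · rintro w B ⟨t', htr, hB⟩
    cases htr with
    | refl =>
        exact ⟨plus q q', WTraceTo.refl _, by rw [← wt_eq_of_wdepth_eq hA hdp]; exact hB⟩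
    | tau hs htr =>
        cases hs with
        | plusL _ hstep =>
            obtain ⟨u', hu, hBu⟩ := h.1 w B ⟨t', WTraceTo.tau hstep htr, hB⟩
            rcases wtrace_plusL hu q' with h'' | ⟨hw, hu'⟩
            · exact ⟨u', h'', hBu⟩
            · obtain ⟨q₀, hq₀⟩ := h.2.2 ⟨_, hstep⟩
              refine ⟨q₀, ?_, fun s hs => hBu s ?_⟩
              · rw [hw]
                exact WTraceTo.tau (Step.plusL _ hq₀) (WTraceTo.refl _)
              · rw [hu']
                exact wt_tau_sub hq₀ hs
        | plusR _ hstep =>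
            obtain ⟨u', hu, hBu⟩ := h'.1 w B ⟨t', WTraceTo.tau hstep htr, hB⟩
            rcases wtrace_plusR hu q with h'' | ⟨hw, hu'⟩
            · exact ⟨u', h'', hBu⟩
            · obtain ⟨q₀, hq₀⟩ := h'.2.2 ⟨_, hstep⟩
              refine ⟨q₀, ?_, fun s hs => hBu s ?_⟩
              · rw [hw]
                exact WTraceTo.tau (Step.plusR _ hq₀) (WTraceTo.refl _)
              · rw [hu']
                exact wt_tau_sub hq₀ hs
    | act hs htr =>
        cases hs with
        | plusL _ hstep =>
            obtain ⟨u', hu, hBu⟩ := h.1 _ B ⟨t', WTraceTo.act hstep htr, hB⟩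
            rcases wtrace_plusL hu q' with h'' | ⟨hw, -⟩
            · exact ⟨u', h'', hBu⟩
            · cases hw
        | plusR _ hstep =>
            obtain ⟨u', hu, hBu⟩ := h'.1 _ B ⟨t', WTraceTo.act hstep htr, hB⟩
            rcases wtrace_plusR hu q with h'' | ⟨hw, -⟩
            · exact ⟨u', h'', hBu⟩
            · cases hw
  · rintro ⟨s, hs⟩
    cases hs with
    | plusL _ hstep =>
        obtain ⟨q₀, hq₀⟩ := h.2.2 ⟨_, hstep⟩
        exact ⟨q₀, Step.plusL _ hq₀⟩
    | plusR _ hstep =>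
        obtain ⟨q₀, hq₀⟩ := h'.2.2 ⟨_, hstep⟩
        exact ⟨q₀, Step.plusR _ hq₀⟩

theorem ideriv_sound {a : A} (hA : ∀ b : A, b = a) {E : Tm A V → Tm A V → Prop}
    (hsound : ∀ t u : Tm A V, E t u →
      ∀ ρ : V → Tm A V, ClosedSub ρ → WIFle (subst ρ t) (subst ρ u))
    {v w : Tm A V} (h : IDeriv E v w) :
    ∀ ρ : V → Tm A V, ClosedSub ρ → WIFle (subst ρ v) (subst ρ w) := by
  induction h with
  | ax hE => exact fun ρ hρ => hsound _ _ hE ρ hρ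
  | inst σ hE =>
      intro ρ hρ
      rw [subst_comp, subst_comp]
      exact hsound _ _ hE _ (closedSub_comp hρ)
  | refl t => exact fun ρ hρ => wifle_refl _
  | trans _ _ ih1 ih2 => exact fun ρ hρ => wifle_trans (ih1 ρ hρ) (ih2 ρ hρ)
  | pre α _ ih => exact fun ρ hρ => wifle_pre hA α (ih ρ hρ)
  | plus _ _ ih1 ih2 => exact fun ρ hρ => wifle_plus hA (ih1 ρ hρ) (ih2 ρ hρ)

end Tm
namespace Tm

variable {A V : Type}

/-- Key semantic lemma: occurrence depths of a variable can only grow along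
the weak impossible futures preorder (over a singleton alphabet). -/
theorem sem_occ {a : A} (hA : ∀ b : A, b = a) {v w : Tm A V}
    (Hs : ∀ ρ : V → Tm A V, ClosedSub ρ → WIFle (subst ρ v) (subst ρ w))
    {x : V} {k : ℕ} (hk : k ∈ Occ x v) : k ∈ Occ x w := by
  classical
  set n := wdepth w + 1 with hn
  set ρ : V → Tm A V := fun z => if z = x then npre a n nil else nil with hρdef
  have hρ : ClosedSub ρ := by
    intro z
    simp only [hρdef]
    split
    · exact closed_npre a n
    · simp [Closed, vars]
  have H := Hs ρ hρ
  obtain ⟨v', trv, hxv⟩ := occ_wtv hA hk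
  have t1 : WTraceTo (subst ρ v) (List.replicate k a) (subst ρ v') := wtrace_subst trv
  have inner : WTraceTo (ρ x) (List.replicate n a) nil := by
    simp only [hρdef, if_pos rfl]
    exact wtrace_npre a n
  rcases wtrace_initVars hxv inner with ⟨heq, -⟩ | t2
  · exact absurd heq (by simp [hn])
  have t3 : WTraceTo (subst ρ v) (List.replicate (k + n) a) nil := by
    rw [List.replicate_add]
    exact wtrace_append t1 t2
  have hIF : WImpFut (subst ρ v) (List.replicate (k + n) a) {[a]} := by
    refine ⟨nil, t3, ?_⟩
    rintro s ⟨u, hu⟩ hsB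
    obtain ⟨rfl, -⟩ := wtrace_nil hu
    simp at hsB
  obtain ⟨u', tru, hBu⟩ := H.1 _ _ hIF
  have hna : [a] ∉ WT u' := fun h => hBu [a] h rfl
  have hdu : wdepth u' = 0 := by
    rw [wt_char hA] at hna
    simp only [Set.mem_setOf_eq, List.length_cons, List.length_nil] at hna
    omega
  rcases wtrace_decomp tru with ⟨w', trw, rfl⟩ | ⟨w1, w2, t', y, heq, tr1, hy, tr2⟩
  · have hlen := wtrace_len trw
    simp only [List.length_replicate] at hlen
    omega
  · have hlens : k + n = w1.length + w2.length := by
      have := congrArg List.length heq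
      simpa using this
    by_cases hyx : y = x
    · subst hyx
      rw [hρdef] at tr2
      simp only [if_pos rfl] at tr2
      obtain ⟨hu', hle⟩ := wtrace_npre_inv tr2
      have : wdepth u' = n - w2.length := by
        rw [hu', wdepth_npre]; simp [wdepth]
      have hw2 : w2.length = n := by omega
      have hw1 : w1.length = k := by omega
      have := wtv_occ tr1 hy
      rwa [hw1] at this
    · rw [hρdef] at tr2
      simp only [if_neg hyx] at tr2
      obtain ⟨rfl, -⟩ := wtrace_nil tr2
      have := wtrace_len tr1
      simp at hlens
      omega

end Tm
namespace Tm

variable {A V : Type}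

theorem occ_enter {a : A} (hA : ∀ b : A, b = a) {y : V} {t : Tm A V} {j n : ℕ}
    (hn : 1 ≤ n) {ρ : V → Tm A V} (hρy : ρ y = npre a n nil) (hj : j ∈ Occ y t) :
    List.replicate (j + n) a ∈ WT (subst ρ t) := by
  obtain ⟨t₁, tr, hyi⟩ := occ_wtv hA hj
  have t1 := wtrace_subst (σ := ρ) tr
  have inner : WTraceTo (ρ y) (List.replicate n a) nil := by
    rw [hρy]; exact wtrace_npre a n
  rcases wtrace_initVars hyi inner with ⟨heq, -⟩ | t2
  · exact absurd heq (by simp; omega)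
  · exact ⟨nil, by rw [List.replicate_add]; exact wtrace_append t1 t2⟩

theorem occ_exit {a : A} {y : V} {t : Tm A V} {n : ℕ} (hn : wdepth t < n)
    {ρ : V → Tm A V} (hρy : ρ y = npre a n nil) (hρz : ∀ z, z ≠ y → ρ z = nil)
    {N : ℕ} (hNn : n ≤ N) (hmem : List.replicate N a ∈ WT (subst ρ t)) :
    ∃ j l, j ∈ Occ y t ∧ j + l = N ∧ l ≤ n := by
  obtain ⟨u', tru⟩ := hmem
  rcases wtrace_decomp tru with ⟨w', trw, -⟩ | ⟨w1, w2, t', z, heq, tr1, hz, tr2⟩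
  · have := wtrace_len trw
    simp only [List.length_replicate] at this
    omega
  · have hlens : N = w1.length + w2.length := by
      have := congrArg List.length heq
      simpa using this
    by_cases hzy : z = y
    · subst hzy
      rw [hρy] at tr2
      have hl2 := wtrace_len tr2
      rw [wdepth_npre] at hl2
      simp only [wdepth] at hl2
      exact ⟨w1.length, w2.length, wtv_occ tr1 hz, by omega, by omega⟩
    · rw [hρz z hzy] at tr2
      obtain ⟨rfl, -⟩ := wtrace_nil tr2
      have := wtrace_len tr1
      simp only [List.length_nil] at hlens
      omega

/-- The key lemma for substitution instances of sound axioms. -/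
theorem key_inst {a : A} (hA : ∀ b : A, b = a) {E : Tm A V → Tm A V → Prop}
    (hsound : ∀ t u : Tm A V, E t u →
      ∀ ρ : V → Tm A V, ClosedSub ρ → WIFle (subst ρ t) (subst ρ u))
    {m : ℕ} (hm : ∀ t u : Tm A V, E t u → wdepth t < m ∧ wdepth u < m)
    {x : V} {t u : Tm A V} (hE : E t u) (σ : V → Tm A V)
    (hΦ : 0 ∈ Occ x (subst σ u) ∧ ∀ k, 1 ≤ k → k < m → k ∉ Occ x (subst σ u)) :
    0 ∈ Occ x (subst σ t) ∧ ∀ k, 1 ≤ k → k < m → k ∉ Occ x (subst σ t) := by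
  classical
  have Hs : ∀ ρ : V → Tm A V, ClosedSub ρ →
      WIFle (subst ρ (subst σ t)) (subst ρ (subst σ u)) := by
    intro ρ hρ
    rw [subst_comp, subst_comp]
    exact hsound _ _ hE _ (closedSub_comp hρ)
  refine ⟨?_, fun k h1 h2 hk => hΦ.2 k h1 h2 (sem_occ hA Hs hk)⟩
  obtain ⟨y, d, e, hd, he, hde⟩ := occ_subst.1 hΦ.1
  have hd0 : d = 0 := by omega
  have he0 : e = 0 := by omega
  subst hd0; subst he0
  -- step 2 : y occurs only at depth 0 in u
  have hOyu : ∀ k ∈ Occ y u, k = 0 := by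
    intro k hk
    by_contra h0
    have hk1 : 1 ≤ k := by omega
    have hkm : k < m := lt_of_le_of_lt (occ_le_wdepth hk) (hm t u hE).2
    exact hΦ.2 k hk1 hkm (occ_subst.2 ⟨y, k, 0, hk, he, by omega⟩)
  -- the distinguishing substitution
  set n := max (wdepth t) (wdepth u) + 1 with hn
  set ρn : V → Tm A V := fun z => if z = y then npre a n nil else nil with hρdef
  have hρy : ρn y = npre a n nil := by simp [hρdef]
  have hρz : ∀ z, z ≠ y → ρn z = nil := by intro z hz; simp [hρdef, hz]
  have hρn : ClosedSub ρn := by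
    intro z
    simp only [hρdef]
    split
    · exact closed_npre a n
    · simp [Closed, vars]
  have Heq : WT (subst ρn t) = WT (subst ρn u) := (hsound t u hE ρn hρn).2.1
  -- step 3 : y occurs in t
  have h3 : ∃ j, j ∈ Occ y t := by
    have hmem : List.replicate n a ∈ WT (subst ρn u) := by
      have := occ_enter hA (by omega) hρy hd
      simpa using this
    rw [← Heq] at hmem
    obtain ⟨j, l, hj, -, -⟩ := occ_exit (by omega) hρy hρz le_rfl hmem
    exact ⟨j, hj⟩
  -- step 4 : y occurs only at depth 0 in t
  have h4 : ∀ j ∈ Occ y t, j = 0 := by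
    intro j hj
    by_contra h0
    have hmem : List.replicate (j + n) a ∈ WT (subst ρn t) :=
      occ_enter hA (by omega) hρy hj
    rw [Heq] at hmem
    obtain ⟨j', l, hj', hsum, hl⟩ := occ_exit (by omega) hρy hρz (by omega) hmem
    have := hOyu j' hj'
    omega
  obtain ⟨j, hj⟩ := h3
  have := h4 j hj
  subst this
  exact occ_subst.2 ⟨y, 0, 0, hj, he, rfl⟩

/-- The invariant is preserved along derivations from a sound axiom system. -/
theorem prop_inv {a : A} (hA : ∀ b : A, b = a) {E : Tm A V → Tm A V → Prop}
    (hsound : ∀ t u : Tm A V, E t u →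
      ∀ ρ : V → Tm A V, ClosedSub ρ → WIFle (subst ρ t) (subst ρ u))
    {m : ℕ} (hm : ∀ t u : Tm A V, E t u → wdepth t < m ∧ wdepth u < m)
    {x : V} {v w : Tm A V} (h : IDeriv E v w)
    (hΦ : 0 ∈ Occ x w ∧ ∀ k, 1 ≤ k → k < m → k ∉ Occ x w) :
    0 ∈ Occ x v ∧ ∀ k, 1 ≤ k → k < m → k ∉ Occ x v := by
  induction h with
  | @ax t u hE =>
      have := key_inst hA hsound hm hE Tm.var (by rw [subst_var]; exact hΦ)
      rwa [subst_var] at this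
  | inst σ hE => exact key_inst hA hsound hm hE σ hΦ
  | refl t => exact hΦ
  | trans _ _ ih1 ih2 => exact ih1 (ih2 hΦ)
  | @pre α t u _ ih =>
      cases α with
      | none =>
          simp only [Occ] at hΦ ⊢
          exact ih hΦ
      | some b =>
          exfalso
          have h0 := hΦ.1
          simp only [Occ, Set.mem_image] at h0
          obtain ⟨k, -, hk0⟩ := h0
          omega
  | @plus t u t' u' d1 d2 ih1 ih2 =>
      simp only [Occ, Set.mem_union] at hΦ ⊢
      have hneg1 : ∀ k, 1 ≤ k → k < m → k ∉ Occ x t' :=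
        fun k h1 h2 hk => hΦ.2 k h1 h2 (Or.inl hk)
      have hneg2 : ∀ k, 1 ≤ k → k < m → k ∉ Occ x u' :=
        fun k h1 h2 hk => hΦ.2 k h1 h2 (Or.inr hk)
      rcases hΦ.1 with h0 | h0
      · have Φ1 := ih1 ⟨h0, hneg1⟩
        refine ⟨Or.inl Φ1.1, ?_⟩
        rintro k h1k hkm (hk | hk)
        · exact Φ1.2 k h1k hkm hk
        · exact hneg2 k h1k hkm (sem_occ hA (ideriv_sound hA hsound d2) hk)
      · have Φ2 := ih2 ⟨h0, hneg2⟩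
        refine ⟨Or.inr Φ2.1, ?_⟩
        rintro k h1k hkm (hk | hk)
        · exact hneg1 k h1k hkm (sem_occ hA (ideriv_sound hA hsound d1) hk)
        · exact Φ2.2 k h1k hkm hk

theorem ideriv_empty {E : Tm A V → Tm A V → Prop} {v w : Tm A V}
    (h : IDeriv E v w) (hemp : ∀ t u, ¬ E t u) : v = w := by
  induction h with
  | ax hE => exact absurd hE (hemp _ _)
  | inst σ hE => exact absurd hE (hemp _ _)
  | refl t => rfl
  | trans _ _ ih1 ih2 => exact ih1.trans ih2
  | pre α _ ih => rw [ih]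
  | plus _ _ ih1 ih2 => rw [ih1, ih2]

theorem occ_npre_var {a : A} {x : V} {k j : ℕ} :
    j ∈ Occ x (npre a k (var x : Tm A V)) ↔ j = k := by
  induction k generalizing j with
  | zero => simp [npre, Occ]
  | succ n ih =>
      simp only [npre, Occ, Set.mem_image]
      constructor
      · rintro ⟨j', hj', rfl⟩
        rw [ih.1 hj']
      · rintro rfl
        exact ⟨n, ih.2 rfl, rfl⟩

end Tm

/-- for `|A| = 1`, the inequational theory of BCCS(A) modulo the
weak impossible futures preorder has no finite basis: for every finite sound
axiomatization `E` and every `m` exceeding the weak depth of all terms in `E`,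
the inequation `a^m x ≼ a^m x + x` is sound but not derivable from `E`. -/
theorem stmt19 {A V : Type} [Countable V] (a : A) (hA : ∀ b : A, b = a) (x : V)
    (E : Set (Tm A V × Tm A V)) (hfin : E.Finite)
    (hsound : ∀ t u : Tm A V, (t, u) ∈ E →
      ∀ ρ : V → Tm A V, Tm.ClosedSub ρ → Tm.WIFle (Tm.subst ρ t) (Tm.subst ρ u))
    (m : ℕ) (hm : ∀ t u : Tm A V, (t, u) ∈ E → Tm.wdepth t < m ∧ Tm.wdepth u < m) :
    (∀ ρ : V → Tm A V, Tm.ClosedSub ρ →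
      Tm.WIFle (Tm.subst ρ (Tm.npre a m (.var x)))
               (Tm.subst ρ (.plus (Tm.npre a m (.var x)) (.var x)))) ∧
    ¬ Tm.IDeriv (fun t u => (t, u) ∈ E)
        (Tm.npre a m (.var x)) (.plus (Tm.npre a m (.var x)) (.var x)) := by
  constructor
  · -- soundness of the target inequation
    intro ρ hρ
    simp only [Tm.subst, Tm.subst_npre]
    set r : Tm A V := ρ x with hr
    have hd : Tm.wdepth (Tm.plus (Tm.npre a m r) r) = Tm.wdepth (Tm.npre a m r) := by
      simp only [Tm.wdepth, Tm.wdepth_npre]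
      omega
    refine ⟨?_, Tm.wt_eq_of_wdepth_eq hA hd.symm, ?_⟩
    · rintro w B ⟨t', htr, hB⟩
      cases htr with
      | refl =>
          refine ⟨Tm.plus (Tm.npre a m r) r, Tm.WTraceTo.refl _, ?_⟩
          rw [Tm.wt_eq_of_wdepth_eq hA hd]
          exact hB
      | tau hs htr => exact ⟨t', Tm.WTraceTo.tau (Tm.Step.plusL _ hs) htr, hB⟩
      | act hs htr => exact ⟨t', Tm.WTraceTo.act (Tm.Step.plusL _ hs) htr, hB⟩
    · rintro ⟨p', hp⟩
      exact ⟨p', Tm.Step.plusL _ hp⟩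
  · -- non-derivability
    intro hd
    rcases Nat.eq_zero_or_pos m with rfl | hm1
    · have hemp : ∀ t u : Tm A V, ¬ (t, u) ∈ E := by
        intro t u h
        have := (hm t u h).1
        omega
      have := Tm.ideriv_empty hd hemp
      simp only [Tm.npre] at this
      cases this
    · have hΦw : 0 ∈ Tm.Occ x (Tm.plus (Tm.npre a m (Tm.var x)) (Tm.var x)) ∧
          ∀ k, 1 ≤ k → k < m →
            k ∉ Tm.Occ x (Tm.plus (Tm.npre a m (Tm.var x)) (Tm.var x)) := by
        constructor
        · exact Or.inr ⟨rfl, rfl⟩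
        · rintro k h1 h2 (hk | hk)
          · have := Tm.occ_npre_var.1 hk
            omega
          · obtain ⟨hk0, -⟩ := hk
            omega
      have hΦv := Tm.prop_inv hA hsound hm hd hΦw
      have := Tm.occ_npre_var.1 hΦv.1
      omega
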